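/- Let q ∈ [1,∞) be fixed. Then as x → +∞ through real values, H_{qx}(x) = P(x)·(1 + 2q/x + O(x^{−2})), where P(x) = (x/2)^{qx−1}/(√π · Γ(qx+1/2)); that is, there exist constants C > 0 and X > 0 with |H_{qx}(x) − P(x)(1 + 2q/x)| ≤ C·P(x)·x^{−2} for all real x ≥ X. (This follows by averaging the two expansions of H_ν(z) ± iJ_ν(z), which share the same asymptotic series.) -/

import Mathlib

open Complex

/-- `G_ν(w) = Σ_{n=0}^∞ (−1)^n w^n /(Γ(n+3/2) Γ(n+ν+3/2))`. -/
noncomputable def struveG (ν w : ℂ) : ℂ :=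
  ∑' n : ℕ, (-1) ^ n * w ^ n /
    (Complex.Gamma ((n : ℂ) + 3 / 2) * Complex.Gamma ((n : ℂ) + ν + 3 / 2))

/-- The Struve function `H_ν(z) = (z/2)^{ν+1} G_ν((z/2)²)` (principal branch). -/
noncomputable def struveH (ν z : ℂ) : ℂ :=
  (z / 2) ^ (ν + 1) * struveG ν ((z / 2) ^ 2)

/-- The leading factor `P(x) = (x/2)^{qx−1}/(√π · Γ(qx+1/2))` of the asymptotic
expansion (real power `rpow`). -/
noncomputable def struveP (q x : ℝ) : ℝ :=
  (x / 2) ^ (q * x - 1) / (Real.sqrt Real.pi * Real.Gamma (q * x + 1 / 2))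

namespace StruveAux

/-- derivative of `(1-t^2)^c` for `c ≥ 1`, valid at every real `t`. -/
lemma hd0 (c : ℝ) (hc : 1 ≤ c) (t : ℝ) :
    HasDerivAt (fun t : ℝ => (1 - t ^ 2) ^ c) (-2 * c * (t * (1 - t ^ 2) ^ (c - 1))) t := by
  have h1 : HasDerivAt (fun t : ℝ => 1 - t ^ 2) (-(2 * t)) t := by
    simpa using (hasDerivAt_pow 2 t).const_sub 1
  have := h1.rpow_const (p := c) (Or.inr hc)
  convert this using 1
  ring

/-- derivative of `t^k (1-t^2)^c` for `c ≥ 1`. -/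
lemma hdk (k : ℕ) (c : ℝ) (hc : 1 ≤ c) (t : ℝ) :
    HasDerivAt (fun t : ℝ => t ^ k * (1 - t ^ 2) ^ c)
      ((k : ℝ) * (t ^ (k - 1) * (1 - t ^ 2) ^ c)
        - 2 * c * (t ^ (k + 1) * (1 - t ^ 2) ^ (c - 1))) t := by
  have := (hasDerivAt_pow k t).mul (hd0 c hc t)
  refine this.congr_deriv ?_
  ring

lemma cont_m (k : ℕ) (c : ℝ) (hc : 0 ≤ c) :
    Continuous (fun t : ℝ => t ^ k * (1 - t ^ 2) ^ c) :=
  (continuous_pow k).mul <|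
    (continuous_const.sub (continuous_pow 2)).rpow_const fun _ => Or.inr hc

lemma cont_u (c : ℝ) (hc : 0 ≤ c) : Continuous (fun t : ℝ => (1 - t ^ 2) ^ c) := by
  simpa using cont_m 0 c hc

/-- `∫₀¹ t (1-t²)^c dt = 1/(2(c+1))` for `c ≥ 1`. -/
lemma J1 (c : ℝ) (hc : 1 ≤ c) :
    ∫ t in (0:ℝ)..1, t * (1 - t ^ 2) ^ c = 1 / (2 * (c + 1)) := by
  have hc1 : (0:ℝ) < c + 1 := by linarith
  have hF : ∀ t ∈ Set.uIcc (0:ℝ) 1,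
      HasDerivAt (fun t : ℝ => -(1 - t ^ 2) ^ (c + 1) / (2 * (c + 1)))
        (t * (1 - t ^ 2) ^ c) t := by
    intro t _
    have := ((hd0 (c + 1) (by linarith) t).neg).div_const (2 * (c + 1))
    refine this.congr_deriv ?_
    have h2 : c + 1 - 1 = c := by ring
    rw [h2]
    field_simp
  rw [intervalIntegral.integral_eq_sub_of_hasDerivAt hF
      ((continuous_id.mul (cont_u c (by linarith))).intervalIntegrable 0 1)]
  have h0 : (1 - (1:ℝ) ^ 2) ^ (c + 1) = 0 := by
    norm_num [Real.zero_rpow (show c + 1 ≠ 0 by linarith)]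
  have h1 : (1 - (0:ℝ) ^ 2) ^ (c + 1) = 1 := by
    norm_num [Real.one_rpow]
  rw [h0, h1]
  field_simp
  ring

/-- the antiderivative used repeatedly -/
lemma hdV (c : ℝ) (hc : 1 ≤ c) (t : ℝ) :
    HasDerivAt (fun t : ℝ => -(1 - t ^ 2) ^ (c + 1) / (2 * (c + 1)))
      (t * (1 - t ^ 2) ^ c) t := by
  have := ((hd0 (c + 1) (by linarith) t).neg).div_const (2 * (c + 1))
  refine this.congr_deriv ?_
  have h2 : c + 1 - 1 = c := by ring
  rw [h2]
  field_simp

lemma splitk (k : ℕ) (c : ℝ) (hc : c ≠ 0) (hc1 : c + 1 ≠ 0) (t : ℝ) :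
    t ^ k * (1 - t ^ 2) ^ (c + 1) = t ^ k * (1 - t ^ 2) ^ c - t ^ (k + 2) * (1 - t ^ 2) ^ c := by
  by_cases h : (1 - t ^ 2) = 0
  · rw [h, Real.zero_rpow hc, Real.zero_rpow hc1]; ring
  · rw [Real.rpow_add_one h]; ring

lemma J3 (c : ℝ) (hc : 1 ≤ c) :
    ∫ t in (0:ℝ)..1, t ^ 3 * (1 - t ^ 2) ^ c = 1 / (2 * (c + 1)) - 1 / (2 * (c + 2)) := by
  have h : ∀ t : ℝ, t ^ 3 * (1 - t ^ 2) ^ c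
      = t ^ 1 * (1 - t ^ 2) ^ c - t ^ 1 * (1 - t ^ 2) ^ (c + 1) := by
    intro t
    have := splitk 1 c (by linarith) (by linarith) t
    rw [this]; ring
  simp only [h, pow_one]
  have h1 : IntervalIntegrable (fun t : ℝ => t * (1 - t ^ 2) ^ c) MeasureTheory.volume 0 1 :=
    (continuous_id.mul (cont_u c (by linarith))).intervalIntegrable 0 1
  have h2 : IntervalIntegrable (fun t : ℝ => t * (1 - t ^ 2) ^ (c + 1)) MeasureTheory.volume 0 1 :=
    (continuous_id.mul (cont_u (c + 1) (by linarith))).intervalIntegrable 0 1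
  rw [intervalIntegral.integral_sub h1 h2, J1 c hc, J1 (c+1) (by linarith)]
  ring_nf

lemma J5 (c : ℝ) (hc : 1 ≤ c) :
    ∫ t in (0:ℝ)..1, t ^ 5 * (1 - t ^ 2) ^ c
      = 1 / (2 * (c + 1)) - 1 / (c + 2) + 1 / (2 * (c + 3)) := by
  have h : ∀ t : ℝ, t ^ 5 * (1 - t ^ 2) ^ c
      = t ^ 3 * (1 - t ^ 2) ^ c - t ^ 3 * (1 - t ^ 2) ^ (c + 1) := by
    intro t
    have := splitk 3 c (by linarith) (by linarith) t
    rw [this]; ring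
  simp only [h]
  have h1 : IntervalIntegrable (fun t : ℝ => t ^ 3 * (1 - t ^ 2) ^ c) MeasureTheory.volume 0 1 :=
    (cont_m 3 c (by linarith)).intervalIntegrable 0 1
  have h2 : IntervalIntegrable (fun t : ℝ => t ^ 3 * (1 - t ^ 2) ^ (c + 1)) MeasureTheory.volume 0 1 :=
    (cont_m 3 (c + 1) (by linarith)).intervalIntegrable 0 1
  rw [intervalIntegral.integral_sub h1 h2, J3 c hc, J3 (c+1) (by linarith)]
  have d1 : c + 1 ≠ 0 := by linarith
  have d2 : c + 2 ≠ 0 := by linarith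
  have d3 : c + 3 ≠ 0 := by linarith
  field_simp
  ring

lemma Gamma_pos (c : ℝ) (hc : 0 < c) : 0 < Real.Gamma c := Real.Gamma_pos_of_pos hc

lemma K_eval : ∀ (n : ℕ) (c : ℝ), 1 ≤ c →
    ∫ t in (0:ℝ)..1, t ^ (2 * n + 1) * (1 - t ^ 2) ^ c
      = (n.factorial : ℝ) * Real.Gamma (c + 1) / (2 * Real.Gamma (c + n + 2))
  | 0, c, hc => by
    have hΓ : Real.Gamma (c + 2) = (c + 1) * Real.Gamma (c + 1) := by
      have := Real.Gamma_add_one (s := c + 1) (by linarith)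
      rw [show c + 1 + 1 = c + 2 by ring] at this
      exact this
    have hΓpos := Gamma_pos (c + 1) (by linarith)
    simp only [Nat.factorial_zero, Nat.cast_zero, Nat.cast_one]
    rw [show (2 : ℕ) * 0 + 1 = 1 by rfl]
    simp only [pow_one]
    rw [J1 c hc, show c + (0:ℝ) + 2 = c + 2 by ring, hΓ]
    field_simp
  | (n + 1), c, hc => by
    have IH := K_eval n (c + 1) (by linarith)
    have hc1 : (0:ℝ) < c + 1 := by linarith
    -- integration by parts
    have hu : ∀ t ∈ Set.uIcc (0:ℝ) 1, HasDerivAt (fun t : ℝ => t ^ (2 * n + 2))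
        ((2 * n + 2 : ℝ) * t ^ (2 * n + 1)) t := by
      intro t _
      have := hasDerivAt_pow (2 * n + 2) t
      refine this.congr_deriv ?_
      push_cast
      ring_nf
    have hv : ∀ t ∈ Set.uIcc (0:ℝ) 1,
        HasDerivAt (fun t : ℝ => -(1 - t ^ 2) ^ (c + 1) / (2 * (c + 1)))
          (t * (1 - t ^ 2) ^ c) t := fun t _ => hdV c hc t
    have hint1 : IntervalIntegrable (fun t : ℝ => (2 * n + 2 : ℝ) * t ^ (2 * n + 1)) MeasureTheory.volume 0 1 :=
      (continuous_const.mul (continuous_pow _)).intervalIntegrable 0 1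
    have hint2 : IntervalIntegrable (fun t : ℝ => t * (1 - t ^ 2) ^ c) MeasureTheory.volume 0 1 :=
      (continuous_id.mul (cont_u c (by linarith))).intervalIntegrable 0 1
    have ibp := intervalIntegral.integral_mul_deriv_eq_deriv_mul hu hv hint1 hint2
    have hb1 : (1:ℝ) - 1 ^ 2 = 0 := by norm_num
    have key : ∫ t in (0:ℝ)..1, t ^ (2 * (n + 1) + 1) * (1 - t ^ 2) ^ c
        = ((2 * n + 2 : ℝ) / (2 * (c + 1))) * ∫ t in (0:ℝ)..1, t ^ (2 * n + 1) * (1 - t ^ 2) ^ (c + 1) := by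
      have e1 : ∀ t : ℝ, t ^ (2 * n + 2) * (t * (1 - t ^ 2) ^ c)
          = t ^ (2 * (n + 1) + 1) * (1 - t ^ 2) ^ c := by intro t; ring
      have e1' : ∫ t in (0:ℝ)..1, t ^ (2 * (n + 1) + 1) * (1 - t ^ 2) ^ c
          = ∫ t in (0:ℝ)..1, t ^ (2 * n + 2) * (t * (1 - t ^ 2) ^ c) :=
        intervalIntegral.integral_congr (fun t _ => (e1 t).symm)
      rw [e1', ibp]
      rw [hb1, Real.zero_rpow (by linarith : c + 1 ≠ 0)]
      have e2 : ∀ t : ℝ, (2 * n + 2 : ℝ) * t ^ (2 * n + 1) * (-(1 - t ^ 2) ^ (c + 1) / (2 * (c + 1)))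
          = (-(2 * n + 2 : ℝ) / (2 * (c + 1))) * (t ^ (2 * n + 1) * (1 - t ^ 2) ^ (c + 1)) := by
        intro t; field_simp
      rw [intervalIntegral.integral_congr (fun t _ => e2 t), intervalIntegral.integral_const_mul]
      ring
    rw [key, IH]
    have hfac : ((n + 1).factorial : ℝ) = (n + 1) * n.factorial := by
      rw [Nat.factorial_succ]; push_cast; ring
    have hΓ : Real.Gamma (c + 2) = (c + 1) * Real.Gamma (c + 1) := by
      have := Real.Gamma_add_one (s := c + 1) (by linarith)
      rw [show c + 1 + 1 = c + 2 by ring] at this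
      exact this
    rw [show c + 1 + 1 = c + 2 by ring, hΓ, show c + 1 + (n:ℝ) + 2 = c + (n+1:ℕ) + 2 by push_cast; ring, hfac]
    have hΓpos := Gamma_pos (c + ((n:ℝ)+1) + 2) (by positivity)
    push_cast
    field_simp

open MeasureTheory in
lemma integral_sin_series (x a : ℝ) (hx : 0 < x) (ha : 1 ≤ a) :
    ∫ t in (0:ℝ)..1, (1 - t ^ 2) ^ a * Real.sin (x * t)
      = ∑' n : ℕ, (-1) ^ n * x ^ (2 * n + 1) / ((2 * n + 1).factorial : ℝ)
          * ((n.factorial : ℝ) * Real.Gamma (a + 1) / (2 * Real.Gamma (a + n + 2))) := by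
  set F : ℕ → ℝ → ℝ := fun n t =>
    (-1) ^ n * (x * t) ^ (2 * n + 1) / ((2 * n + 1).factorial : ℝ) * (1 - t ^ 2) ^ a with hFdef
  have hFcont : ∀ n, Continuous (F n) := by
    intro n
    exact ((continuous_const.mul ((continuous_const.mul continuous_id).pow _)).div_const _).mul
      (cont_u a (by linarith))
  have hsum_pt : ∀ t : ℝ, HasSum (fun n => F n t) ((1 - t ^ 2) ^ a * Real.sin (x * t)) := by
    intro t
    have := (Real.hasSum_sin (x * t)).mul_right ((1 - t ^ 2) ^ a)
    simpa [hFdef, mul_comm] using this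
  have hmaj : Summable (fun n : ℕ => x ^ (2 * n + 1) / ((2 * n + 1).factorial : ℝ)) := by
    have h1 : Summable (fun k : ℕ => x ^ k / (k.factorial : ℝ)) :=
      Real.summable_pow_div_factorial x
    have h2 : Function.Injective (fun n : ℕ => 2 * n + 1) := by
      intro m n h; simp only at h; omega
    exact h1.comp_injective h2
  have hbound : ∀ n : ℕ, ∀ t ∈ Set.Ioc (0:ℝ) 1,
      ‖F n t‖ ≤ x ^ (2 * n + 1) / ((2 * n + 1).factorial : ℝ) := by
    intro n t ht
    have h1 : |F n t| = |x * t| ^ (2 * n + 1) / ((2 * n + 1).factorial : ℝ)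
        * |(1 - t ^ 2) ^ a| := by
      simp [hFdef, abs_mul, abs_div, abs_pow]
    rw [Real.norm_eq_abs, h1]
    have h2 : |x * t| ≤ x := by
      rw [_root_.abs_of_nonneg (mul_nonneg hx.le ht.1.le)]
      nlinarith [ht.1, ht.2, hx]
    have h3 : |(1 - t ^ 2) ^ a| ≤ 1 := by
      have hu : (0:ℝ) ≤ 1 - t ^ 2 := by nlinarith [ht.1, ht.2]
      rw [_root_.abs_of_nonneg (Real.rpow_nonneg hu a)]
      exact Real.rpow_le_one hu (by nlinarith [ht.1, ht.2]) (by linarith)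
    calc |x * t| ^ (2 * n + 1) / ((2 * n + 1).factorial : ℝ) * |(1 - t ^ 2) ^ a|
        ≤ x ^ (2 * n + 1) / ((2 * n + 1).factorial : ℝ) * 1 := by
          gcongr
      _ = x ^ (2 * n + 1) / ((2 * n + 1).factorial : ℝ) := by ring
  have hInt : ∀ n : ℕ, Integrable (F n) (volume.restrict (Set.Ioc (0:ℝ) 1)) := fun n =>
    (hFcont n).integrableOn_Ioc
  have hSumInt : Summable fun n => ∫ t in Set.Ioc (0:ℝ) 1, ‖F n t‖ := by
    refine Summable.of_nonneg_of_le (fun n => integral_nonneg fun t => norm_nonneg _)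
      (fun n => ?_) hmaj
    have step : ∫ t in Set.Ioc (0:ℝ) 1, ‖F n t‖
        ≤ ∫ _t in Set.Ioc (0:ℝ) 1, x ^ (2 * n + 1) / ((2 * n + 1).factorial : ℝ) := by
      refine setIntegral_mono_on (hInt n).norm (integrableOn_const ?_)
        measurableSet_Ioc (hbound n)
      simp [Real.volume_Ioc]
    calc ∫ t in Set.Ioc (0:ℝ) 1, ‖F n t‖
        ≤ ∫ _t in Set.Ioc (0:ℝ) 1, x ^ (2 * n + 1) / ((2 * n + 1).factorial : ℝ) := step
      _ = x ^ (2 * n + 1) / ((2 * n + 1).factorial : ℝ) := by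
          simp [Real.volume_Ioc]
  have hswap := integral_tsum_of_summable_integral_norm hInt hSumInt
  have hL : ∫ t in (0:ℝ)..1, (1 - t ^ 2) ^ a * Real.sin (x * t)
      = ∫ t in Set.Ioc (0:ℝ) 1, ∑' n, F n t := by
    rw [intervalIntegral.integral_of_le zero_le_one]
    exact setIntegral_congr_fun measurableSet_Ioc fun t _ => ((hsum_pt t).tsum_eq).symm
  rw [hL, ← hswap]
  refine tsum_congr fun n => ?_
  have hterm : ∫ t in Set.Ioc (0:ℝ) 1, F n t
      = ((-1) ^ n * x ^ (2 * n + 1) / ((2 * n + 1).factorial : ℝ))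
        * ∫ t in (0:ℝ)..1, t ^ (2 * n + 1) * (1 - t ^ 2) ^ a := by
    rw [← intervalIntegral.integral_of_le zero_le_one, ← intervalIntegral.integral_const_mul]
    refine intervalIntegral.integral_congr fun t _ => ?_
    simp only [hFdef]
    rw [mul_pow]
    ring
  rw [hterm, K_eval n a ha]

lemma Gamma_nat_add_3half (n : ℕ) :
    Real.Gamma ((n : ℝ) + 3 / 2)
      = Real.sqrt Real.pi * ((2 * n + 1).factorial : ℝ)
        / ((n.factorial : ℝ) * 2 ^ (2 * n + 1)) := by
  have hdup := Real.Gamma_mul_Gamma_add_half ((n : ℝ) + 1)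
  have h1 : Real.Gamma ((n : ℝ) + 1) = (n.factorial : ℝ) := Real.Gamma_nat_eq_factorial n
  have h2 : Real.Gamma (2 * ((n : ℝ) + 1)) = ((2 * n + 1).factorial : ℝ) := by
    have : (2 : ℝ) * ((n : ℝ) + 1) = ((2 * n + 1 : ℕ) : ℝ) + 1 := by push_cast; ring
    rw [this, Real.Gamma_nat_eq_factorial]
  have h3 : (2 : ℝ) ^ (1 - 2 * ((n : ℝ) + 1)) = ((2 : ℝ) ^ (2 * n + 1 : ℕ))⁻¹ := by
    have e : (1 : ℝ) - 2 * ((n : ℝ) + 1) = -((2 * n + 1 : ℕ) : ℝ) := by push_cast; ring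
    rw [e, Real.rpow_neg (by norm_num), Real.rpow_natCast]
  have h4 : ((n : ℝ) + 1 + 1 / 2) = (n : ℝ) + 3 / 2 := by ring
  rw [h1, h2, h3, h4] at hdup
  have hfac : (n.factorial : ℝ) ≠ 0 := Nat.cast_ne_zero.2 n.factorial_ne_zero
  field_simp at hdup ⊢
  linarith [hdup]

/-- real version of `struveG` -/
noncomputable def realG (ν w : ℝ) : ℝ :=
  ∑' n : ℕ, (-1) ^ n * w ^ n /
    (Real.Gamma ((n : ℝ) + 3 / 2) * Real.Gamma ((n : ℝ) + ν + 3 / 2))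

lemma realH_eq (ν x : ℝ) (hx : 0 < x) (hν : 3 / 2 ≤ ν) :
    (x / 2) ^ (ν + 1) * realG ν ((x / 2) ^ 2)
      = (x / 2) ^ (ν - 1) / (Real.sqrt Real.pi * Real.Gamma (ν + 1 / 2))
        * (x * ∫ t in (0:ℝ)..1, (1 - t ^ 2) ^ (ν - 1 / 2) * Real.sin (x * t)) := by
  rw [integral_sin_series x (ν - 1/2) hx (by linarith)]
  rw [realG, ← tsum_mul_left]
  rw [show (x / 2) ^ (ν - 1) / (Real.sqrt Real.pi * Real.Gamma (ν + 1 / 2))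
      * (x * ∑' n : ℕ, (-1) ^ n * x ^ (2 * n + 1) / ((2 * n + 1).factorial : ℝ)
          * ((n.factorial : ℝ) * Real.Gamma (ν - 1/2 + 1) / (2 * Real.Gamma (ν - 1/2 + n + 2))))
      = ∑' n : ℕ, (x / 2) ^ (ν - 1) / (Real.sqrt Real.pi * Real.Gamma (ν + 1 / 2))
          * (x * ((-1) ^ n * x ^ (2 * n + 1) / ((2 * n + 1).factorial : ℝ)
            * ((n.factorial : ℝ) * Real.Gamma (ν - 1/2 + 1) / (2 * Real.Gamma (ν - 1/2 + n + 2)))))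
    from by rw [tsum_mul_left, tsum_mul_left]]
  refine tsum_congr fun n => ?_
  have hp : (0:ℝ) < x / 2 := by linarith
  have e1 : (x / 2) ^ (ν + 1) = (x / 2) ^ (ν - 1) * (x / 2) ^ (2 : ℕ) := by
    rw [← Real.rpow_natCast (x/2) 2, ← Real.rpow_add hp]
    norm_num
    ring_nf
  have e2 : Real.Gamma (ν - 1/2 + 1) = Real.Gamma (ν + 1/2) := by
    rw [show ν - 1/2 + 1 = ν + 1/2 by ring]
  have e3 : Real.Gamma (ν - 1/2 + (n:ℝ) + 2) = Real.Gamma ((n:ℝ) + ν + 3/2) := by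
    rw [show ν - 1/2 + (n:ℝ) + 2 = (n:ℝ) + ν + 3/2 by ring]
  have e4 : x ^ (2 * n + 1) = 2 ^ (2 * n + 1) * (x / 2) ^ (2 * n + 1) := by
    rw [div_pow]
    field_simp
  rw [e1, e2, e3, e4, Gamma_nat_add_3half n]
  have hπ : Real.sqrt Real.pi ≠ 0 := by
    positivity
  have hΓ1 : Real.Gamma (ν + 1/2) ≠ 0 := (Gamma_pos _ (by linarith)).ne'
  have hΓ2 : Real.Gamma ((n:ℝ) + ν + 3/2) ≠ 0 := (Gamma_pos _ (by positivity)).ne'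
  have hf1 : ((2 * n + 1).factorial : ℝ) ≠ 0 := Nat.cast_ne_zero.2 (Nat.factorial_ne_zero _)
  have hf2 : (n.factorial : ℝ) ≠ 0 := Nat.cast_ne_zero.2 (Nat.factorial_ne_zero _)
  have h2p : ((2:ℝ)) ^ (2 * n + 1) ≠ 0 := by positivity
  have hppow : ((x/2) ^ (2:ℕ)) ^ n = (x/2) ^ (2 * n) := by
    rw [← pow_mul]
  rw [hppow]
  field_simp
  ring

lemma struveG_ofReal (ν w : ℝ) : struveG (ν : ℂ) (w : ℂ) = ((realG ν w : ℝ) : ℂ) := by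
  rw [struveG, realG, Complex.ofReal_tsum]
  refine tsum_congr fun n => ?_
  have e1 : ((n : ℂ) + 3 / 2) = (((n : ℝ) + 3 / 2 : ℝ) : ℂ) := by push_cast; ring
  have e2 : ((n : ℂ) + (ν : ℂ) + 3 / 2) = (((n : ℝ) + ν + 3 / 2 : ℝ) : ℂ) := by push_cast; ring
  rw [e1, e2, Complex.Gamma_ofReal, Complex.Gamma_ofReal]
  push_cast
  ring

lemma struveH_ofReal (ν x : ℝ) (hx : 0 < x) :
    struveH (ν : ℂ) (x : ℂ)
      = (((x / 2) ^ (ν + 1) * realG ν ((x / 2) ^ 2) : ℝ) : ℂ) := by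
  rw [struveH]
  have e1 : ((x : ℂ) / 2) = (((x / 2 : ℝ)) : ℂ) := by push_cast; ring
  have e2 : ((ν : ℂ) + 1) = (((ν + 1 : ℝ)) : ℂ) := by push_cast; ring
  rw [e1, e2, ← Complex.ofReal_cpow (by linarith : (0:ℝ) ≤ x / 2) (ν + 1)]
  have e3 : ((((x / 2 : ℝ)) : ℂ)) ^ (2 : ℕ) = ((((x / 2) ^ (2:ℕ) : ℝ)) : ℂ) := by push_cast; ring
  rw [e3, struveG_ofReal]
  rw [← Complex.ofReal_mul]

/-! ### integration by parts steps -/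

lemma ibp_sin (x : ℝ) (hx : 0 < x) (f g : ℝ → ℝ)
    (hd : ∀ t ∈ Set.uIcc (0:ℝ) 1, HasDerivAt f (g t) t)
    (hgc : Continuous g) (hf1 : f 1 = 0) :
    ∫ t in (0:ℝ)..1, f t * Real.sin (x * t)
      = f 0 / x + (1 / x) * ∫ t in (0:ℝ)..1, g t * Real.cos (x * t) := by
  have hv : ∀ t ∈ Set.uIcc (0:ℝ) 1,
      HasDerivAt (fun t : ℝ => -Real.cos (x * t) / x) (Real.sin (x * t)) t := by
    intro t _
    have h1 : HasDerivAt (fun t : ℝ => x * t) x t := by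
      simpa using (hasDerivAt_id t).const_mul x
    have h2 := (h1.cos).neg.div_const x
    refine h2.congr_deriv ?_
    field_simp
  have ibp := intervalIntegral.integral_mul_deriv_eq_deriv_mul hd hv
    (hgc.intervalIntegrable 0 1)
    (((Real.continuous_sin).comp (continuous_const.mul continuous_id)).intervalIntegrable 0 1)
  rw [ibp, hf1]
  have e : ∀ t : ℝ, g t * (-Real.cos (x * t) / x)
      = (-(1 / x)) * (g t * Real.cos (x * t)) := by
    intro t; field_simp
  rw [intervalIntegral.integral_congr (fun t _ => e t), intervalIntegral.integral_const_mul]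
  simp only [mul_zero, Real.cos_zero]
  ring

lemma ibp_cos (x : ℝ) (hx : 0 < x) (f g : ℝ → ℝ)
    (hd : ∀ t ∈ Set.uIcc (0:ℝ) 1, HasDerivAt f (g t) t)
    (hgc : Continuous g) (hf1 : f 1 = 0) :
    ∫ t in (0:ℝ)..1, f t * Real.cos (x * t)
      = (-(1 / x)) * ∫ t in (0:ℝ)..1, g t * Real.sin (x * t) := by
  have hv : ∀ t ∈ Set.uIcc (0:ℝ) 1,
      HasDerivAt (fun t : ℝ => Real.sin (x * t) / x) (Real.cos (x * t)) t := by
    intro t _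
    have h1 : HasDerivAt (fun t : ℝ => x * t) x t := by
      simpa using (hasDerivAt_id t).const_mul x
    have h2 := (h1.sin).div_const x
    refine h2.congr_deriv ?_
    field_simp
  have ibp := intervalIntegral.integral_mul_deriv_eq_deriv_mul hd hv
    (hgc.intervalIntegrable 0 1)
    (((Real.continuous_cos).comp (continuous_const.mul continuous_id)).intervalIntegrable 0 1)
  rw [ibp, hf1]
  have e : ∀ t : ℝ, g t * (Real.sin (x * t) / x)
      = (1 / x) * (g t * Real.sin (x * t)) := by
    intro t; field_simp
  rw [intervalIntegral.integral_congr (fun t _ => e t), intervalIntegral.integral_const_mul]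
  simp only [mul_zero, Real.sin_zero, mul_zero, zero_mul]
  ring

/-! ### the derivative chain -/

noncomputable def f0 (a t : ℝ) : ℝ := (1 - t ^ 2) ^ a
noncomputable def f1 (a t : ℝ) : ℝ := -2 * a * (t ^ 1 * (1 - t ^ 2) ^ (a - 1))
noncomputable def f2 (a t : ℝ) : ℝ :=
  -2 * a * (1 - t ^ 2) ^ (a - 1) + 4 * a * (a - 1) * (t ^ 2 * (1 - t ^ 2) ^ (a - 2))
noncomputable def f3 (a t : ℝ) : ℝ :=
  12 * a * (a - 1) * (t ^ 1 * (1 - t ^ 2) ^ (a - 2))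
    - 8 * a * (a - 1) * (a - 2) * (t ^ 3 * (1 - t ^ 2) ^ (a - 3))
noncomputable def f4 (a t : ℝ) : ℝ :=
  12 * a * (a - 1) * (1 - t ^ 2) ^ (a - 2)
    - 48 * a * (a - 1) * (a - 2) * (t ^ 2 * (1 - t ^ 2) ^ (a - 3))
    + 16 * a * (a - 1) * (a - 2) * (a - 3) * (t ^ 4 * (1 - t ^ 2) ^ (a - 4))
noncomputable def f5 (a t : ℝ) : ℝ :=
  -120 * a * (a - 1) * (a - 2) * (t ^ 1 * (1 - t ^ 2) ^ (a - 3))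
    + 160 * a * (a - 1) * (a - 2) * (a - 3) * (t ^ 3 * (1 - t ^ 2) ^ (a - 4))
    - 32 * a * (a - 1) * (a - 2) * (a - 3) * (a - 4) * (t ^ 5 * (1 - t ^ 2) ^ (a - 5))

variable {a : ℝ}

lemma d0 (ha : 6 ≤ a) (t : ℝ) : HasDerivAt (f0 a) (f1 a t) t := by
  unfold f0 f1
  have h := hd0 a (by linarith) t
  convert h using 1
  ring

lemma d1 (ha : 6 ≤ a) (t : ℝ) : HasDerivAt (f1 a) (f2 a t) t := by
  unfold f1 f2
  have h := (hdk 1 (a - 1) (by linarith) t).const_mul (-2 * a)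
  refine h.congr_deriv ?_
  rw [show a - 1 - 1 = a - 2 by ring]
  ring

lemma d2 (ha : 6 ≤ a) (t : ℝ) : HasDerivAt (f2 a) (f3 a t) t := by
  unfold f2 f3
  have h := ((hd0 (a - 1) (by linarith) t).const_mul (-2 * a)).add
    ((hdk 2 (a - 2) (by linarith) t).const_mul (4 * a * (a - 1)))
  refine h.congr_deriv ?_
  rw [show a - 1 - 1 = a - 2 by ring, show a - 2 - 1 = a - 3 by ring]
  ring

lemma d3 (ha : 6 ≤ a) (t : ℝ) : HasDerivAt (f3 a) (f4 a t) t := by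
  unfold f3 f4
  have h := ((hdk 1 (a - 2) (by linarith) t).const_mul (12 * a * (a - 1))).sub
    ((hdk 3 (a - 3) (by linarith) t).const_mul (8 * a * (a - 1) * (a - 2)))
  refine h.congr_deriv ?_
  rw [show a - 2 - 1 = a - 3 by ring, show a - 3 - 1 = a - 4 by ring]
  ring

lemma d4 (ha : 6 ≤ a) (t : ℝ) : HasDerivAt (f4 a) (f5 a t) t := by
  unfold f4 f5
  have h := (((hd0 (a - 2) (by linarith) t).const_mul (12 * a * (a - 1))).sub
    ((hdk 2 (a - 3) (by linarith) t).const_mul (48 * a * (a - 1) * (a - 2)))).add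
    ((hdk 4 (a - 4) (by linarith) t).const_mul (16 * a * (a - 1) * (a - 2) * (a - 3)))
  refine h.congr_deriv ?_
  rw [show a - 2 - 1 = a - 3 by ring, show a - 3 - 1 = a - 4 by ring,
    show a - 4 - 1 = a - 5 by ring]
  ring

lemma contf1 (ha : 6 ≤ a) : Continuous (f1 a) := by
  unfold f1
  exact continuous_const.mul (cont_m 1 (a - 1) (by linarith))

lemma contf2 (ha : 6 ≤ a) : Continuous (f2 a) := by
  unfold f2
  exact (continuous_const.mul (cont_u (a - 1) (by linarith))).add
    (continuous_const.mul (cont_m 2 (a - 2) (by linarith)))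

lemma contf3 (ha : 6 ≤ a) : Continuous (f3 a) := by
  unfold f3
  exact (continuous_const.mul (cont_m 1 (a - 2) (by linarith))).sub
    (continuous_const.mul (cont_m 3 (a - 3) (by linarith)))

lemma contf4 (ha : 6 ≤ a) : Continuous (f4 a) := by
  unfold f4
  exact ((continuous_const.mul (cont_u (a - 2) (by linarith))).sub
    (continuous_const.mul (cont_m 2 (a - 3) (by linarith)))).add
    (continuous_const.mul (cont_m 4 (a - 4) (by linarith)))

lemma contf5 (ha : 6 ≤ a) : Continuous (f5 a) := by
  unfold f5
  exact ((continuous_const.mul (cont_m 1 (a - 3) (by linarith))).add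
    (continuous_const.mul (cont_m 3 (a - 4) (by linarith)))).sub
    (continuous_const.mul (cont_m 5 (a - 5) (by linarith)))

lemma zr (c : ℝ) (hc : c ≠ 0) : ((1:ℝ) - 1 ^ 2) ^ c = 0 := by
  norm_num [Real.zero_rpow hc]

lemma b0 (ha : 6 ≤ a) : f0 a 1 = 0 := by unfold f0; exact zr a (by linarith)
lemma b1 (ha : 6 ≤ a) : f1 a 1 = 0 := by
  unfold f1; rw [zr (a - 1) (by linarith)]; ring
lemma b2 (ha : 6 ≤ a) : f2 a 1 = 0 := by
  unfold f2; rw [zr (a - 1) (by linarith), zr (a - 2) (by linarith)]; ring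
lemma b3 (ha : 6 ≤ a) : f3 a 1 = 0 := by
  unfold f3; rw [zr (a - 2) (by linarith), zr (a - 3) (by linarith)]; ring
lemma b4 (ha : 6 ≤ a) : f4 a 1 = 0 := by
  unfold f4; rw [zr (a - 2) (by linarith), zr (a - 3) (by linarith),
    zr (a - 4) (by linarith)]; ring

lemma z0 : f0 a 0 = 1 := by unfold f0; norm_num [Real.one_rpow]
lemma z2 : f2 a 0 = -2 * a := by unfold f2; norm_num [Real.one_rpow]
lemma z4 : f4 a 0 = 12 * a * (a - 1) := by unfold f4; norm_num [Real.one_rpow]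

lemma key_integral (x : ℝ) (ha : 6 ≤ a) (hx : 0 < x) :
    ∫ t in (0:ℝ)..1, f0 a t * Real.sin (x * t)
      = 1 / x + 2 * a / x ^ 3 + 12 * a * (a - 1) / x ^ 5
        + (1 / x ^ 5) * ∫ t in (0:ℝ)..1, f5 a t * Real.cos (x * t) := by
  have s0 := ibp_sin x hx (f0 a) (f1 a) (fun t _ => d0 ha t) (contf1 ha) (b0 ha)
  have c1 := ibp_cos x hx (f1 a) (f2 a) (fun t _ => d1 ha t) (contf2 ha) (b1 ha)
  have s2 := ibp_sin x hx (f2 a) (f3 a) (fun t _ => d2 ha t) (contf3 ha) (b2 ha)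
  have c3 := ibp_cos x hx (f3 a) (f4 a) (fun t _ => d3 ha t) (contf4 ha) (b3 ha)
  have s4 := ibp_sin x hx (f4 a) (f5 a) (fun t _ => d4 ha t) (contf5 ha) (b4 ha)
  rw [s0, c1, s2, c3, s4, z0, z2, z4]
  field_simp
  ring

/-! ### bounding the remainder integral -/

noncomputable def gB (a t : ℝ) : ℝ :=
  120 * a * (a - 1) * (a - 2) * (t * (1 - t ^ 2) ^ (a - 3))
    + 160 * a * (a - 1) * (a - 2) * (a - 3) * (t ^ 3 * (1 - t ^ 2) ^ (a - 4))
    + 32 * a * (a - 1) * (a - 2) * (a - 3) * (a - 4) * (t ^ 5 * (1 - t ^ 2) ^ (a - 5))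

lemma gB_int (ha : 6 ≤ a) : ∫ t in (0:ℝ)..1, gB a t = 172 * a * (a - 1) := by
  unfold gB
  have i1 : IntervalIntegrable
      (fun t : ℝ => 120 * a * (a - 1) * (a - 2) * (t * (1 - t ^ 2) ^ (a - 3)))
      MeasureTheory.volume 0 1 :=
    (continuous_const.mul (continuous_id.mul (cont_u (a - 3) (by linarith)))).intervalIntegrable 0 1
  have i2 : IntervalIntegrable
      (fun t : ℝ => 160 * a * (a - 1) * (a - 2) * (a - 3) * (t ^ 3 * (1 - t ^ 2) ^ (a - 4)))
      MeasureTheory.volume 0 1 :=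
    (continuous_const.mul (cont_m 3 (a - 4) (by linarith))).intervalIntegrable 0 1
  have i3 : IntervalIntegrable
      (fun t : ℝ => 32 * a * (a - 1) * (a - 2) * (a - 3) * (a - 4) * (t ^ 5 * (1 - t ^ 2) ^ (a - 5)))
      MeasureTheory.volume 0 1 :=
    (continuous_const.mul (cont_m 5 (a - 5) (by linarith))).intervalIntegrable 0 1
  rw [intervalIntegral.integral_add (i1.add i2) i3, intervalIntegral.integral_add i1 i2,
    intervalIntegral.integral_const_mul, intervalIntegral.integral_const_mul,
    intervalIntegral.integral_const_mul, J1 (a - 3) (by linarith), J3 (a - 4) (by linarith),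
    J5 (a - 5) (by linarith)]
  have h2 : a - 2 ≠ 0 := by linarith
  have h3 : a - 3 ≠ 0 := by linarith
  have h4 : a - 4 ≠ 0 := by linarith
  rw [show a - 3 + 1 = a - 2 by ring, show a - 4 + 1 = a - 3 by ring,
    show a - 4 + 2 = a - 2 by ring, show a - 5 + 1 = a - 4 by ring,
    show a - 5 + 2 = a - 3 by ring, show a - 5 + 3 = a - 2 by ring]
  field_simp
  ring

lemma f5_bound (x : ℝ) (ha : 6 ≤ a) :
    |∫ t in (0:ℝ)..1, f5 a t * Real.cos (x * t)| ≤ 172 * a * (a - 1) := by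
  have hgc : Continuous (gB a) := by
    unfold gB
    exact ((continuous_const.mul (continuous_id.mul (cont_u (a - 3) (by linarith)))).add
      (continuous_const.mul (cont_m 3 (a - 4) (by linarith)))).add
      (continuous_const.mul (cont_m 5 (a - 5) (by linarith)))
  have hpt : ∀ t ∈ Set.Ioc (0:ℝ) 1, ‖f5 a t * Real.cos (x * t)‖ ≤ gB a t := by
    intro t ht
    have hu : (0:ℝ) ≤ 1 - t ^ 2 := by nlinarith [ht.1, ht.2]
    have hM1 : (0:ℝ) ≤ t * (1 - t ^ 2) ^ (a - 3) :=
      mul_nonneg ht.1.le (Real.rpow_nonneg hu _)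
    have hM2 : (0:ℝ) ≤ t ^ 3 * (1 - t ^ 2) ^ (a - 4) :=
      mul_nonneg (pow_nonneg ht.1.le 3) (Real.rpow_nonneg hu _)
    have hM3 : (0:ℝ) ≤ t ^ 5 * (1 - t ^ 2) ^ (a - 5) :=
      mul_nonneg (pow_nonneg ht.1.le 5) (Real.rpow_nonneg hu _)
    have hc1 : (0:ℝ) ≤ 120 * a * (a - 1) * (a - 2) :=
      mul_nonneg (mul_nonneg (mul_nonneg (by norm_num) (by linarith)) (by linarith)) (by linarith)
    have hc2 : (0:ℝ) ≤ 160 * a * (a - 1) * (a - 2) * (a - 3) :=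
      mul_nonneg (mul_nonneg (mul_nonneg (mul_nonneg (by norm_num) (by linarith)) (by linarith))
        (by linarith)) (by linarith)
    have hc3 : (0:ℝ) ≤ 32 * a * (a - 1) * (a - 2) * (a - 3) * (a - 4) :=
      mul_nonneg (mul_nonneg (mul_nonneg (mul_nonneg (mul_nonneg (by norm_num) (by linarith))
        (by linarith)) (by linarith)) (by linarith)) (by linarith)
    have hP1 := mul_nonneg hc1 hM1
    have hP2 := mul_nonneg hc2 hM2
    have hP3 := mul_nonneg hc3 hM3
    have h5 : |f5 a t| ≤ gB a t := by
      rw [abs_le]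
      unfold f5 gB
      constructor
      · nlinarith [hP1, hP2, hP3]
      · nlinarith [hP1, hP2, hP3]
    calc ‖f5 a t * Real.cos (x * t)‖ = |f5 a t| * |Real.cos (x * t)| := by
          rw [Real.norm_eq_abs, abs_mul]
      _ ≤ gB a t * 1 := by
          refine mul_le_mul h5 (Real.abs_cos_le_one _) (abs_nonneg _) ?_
          exact le_trans (abs_nonneg _) h5
      _ = gB a t := by ring
  have hae : ∀ᵐ t ∂(MeasureTheory.volume.restrict (Set.uIoc (0:ℝ) 1)),
      ‖f5 a t * Real.cos (x * t)‖ ≤ gB a t := by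
    refine (MeasureTheory.ae_restrict_mem measurableSet_uIoc).mono fun t ht => ?_
    rw [Set.uIoc_of_le (zero_le_one (α := ℝ))] at ht
    exact hpt t ht
  have hle := intervalIntegral.norm_integral_le_abs_of_norm_le hae (hgc.intervalIntegrable 0 1)
  rw [Real.norm_eq_abs, gB_int ha] at hle
  calc |∫ t in (0:ℝ)..1, f5 a t * Real.cos (x * t)| ≤ |172 * a * (a - 1)| := hle
    _ = 172 * a * (a - 1) := _root_.abs_of_nonneg (by nlinarith)

end StruveAux

set_option maxHeartbeats 1000000 in
theorem stmt_17 (q : ℝ) (hq : 1 ≤ q) :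
    ∃ C > (0 : ℝ), ∃ X > (0 : ℝ), ∀ x : ℝ, X ≤ x →
      ‖struveH ((q * x : ℝ) : ℂ) (x : ℂ) - (struveP q x : ℂ) * (1 + 2 * q / x)‖ ≤
        C * struveP q x / x ^ 2 := by
  refine ⟨1 + 184 * q ^ 2, by positivity, 100, by norm_num, fun x hx => ?_⟩
  have hx0 : (0:ℝ) < x := by linarith
  have hν : (100:ℝ) ≤ q * x := by nlinarith
  set a : ℝ := q * x - 1 / 2 with ha_def
  have ha : 6 ≤ a := by rw [ha_def]; linarith
  have ha_qx : a ≤ q * x := by rw [ha_def]; linarith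
  have hH := StruveAux.struveH_ofReal (q * x) x hx0
  have hreal := StruveAux.realH_eq (q * x) x hx0 (by linarith)
  have hPpos : 0 < struveP q x := by
    rw [struveP]
    have h1 : (0:ℝ) < (x / 2) ^ (q * x - 1) := Real.rpow_pos_of_pos (by linarith) _
    have h2 : (0:ℝ) < Real.sqrt Real.pi := Real.sqrt_pos.2 Real.pi_pos
    have h3 : (0:ℝ) < Real.Gamma (q * x + 1 / 2) := Real.Gamma_pos_of_pos (by nlinarith)
    positivity
  set R : ℝ := ∫ t in (0:ℝ)..1, StruveAux.f5 a t * Real.cos (x * t) with hRdef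
  have hR := StruveAux.f5_bound (a := a) x ha
  rw [← hRdef] at hR
  have hkey := StruveAux.key_integral (a := a) x ha hx0
  rw [← hRdef] at hkey
  have e0 : ∀ t : ℝ, (1 - t ^ 2) ^ (q * x - 1 / 2) = StruveAux.f0 a t := by
    intro t
    rw [StruveAux.f0, ha_def]
  simp_rw [e0] at hreal
  rw [hkey] at hreal
  -- pass to the real absolute value
  have hdiff : struveH ((q * x : ℝ) : ℂ) (x : ℂ) - (struveP q x : ℂ) * (1 + 2 * q / x)
      = ((((x / 2) ^ (q * x + 1) * StruveAux.realG (q * x) ((x / 2) ^ 2))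
          - struveP q x * (1 + 2 * q / x) : ℝ) : ℂ) := by
    rw [hH]
    push_cast
    ring
  rw [hdiff, Complex.norm_real, Real.norm_eq_abs]
  rw [hreal]
  have hP : (x / 2) ^ (q * x - 1) / (Real.sqrt Real.pi * Real.Gamma (q * x + 1 / 2))
      = struveP q x := rfl
  rw [hP]
  -- algebraic reorganization of the error
  have hE : struveP q x * (x * (1 / x + 2 * a / x ^ 3 + 12 * a * (a - 1) / x ^ 5
        + 1 / x ^ 5 * R)) - struveP q x * (1 + 2 * q / x)
      = struveP q x * ((-x ^ 2 + 12 * a * (a - 1) + R) / x ^ 4) := by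
    rw [ha_def]
    field_simp
    ring
  rw [hE, abs_mul, _root_.abs_of_pos hPpos, abs_div, _root_.abs_of_pos (by positivity : (0:ℝ) < x ^ 4)]
  have hEE : |(-x ^ 2 + 12 * a * (a - 1) + R)| ≤ (1 + 184 * q ^ 2) * x ^ 2 := by
    have h1 : a * (a - 1) ≤ a ^ 2 := by nlinarith
    have h2 : a ^ 2 ≤ (q * x) ^ 2 := by nlinarith
    have h4 : a * (a - 1) ≤ q ^ 2 * x ^ 2 := by nlinarith [h1, h2]
    have h0 : 0 ≤ a * (a - 1) := by nlinarith
    have hB0 : (0:ℝ) ≤ q ^ 2 * x ^ 2 := by positivity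
    have h3 := abs_le.1 hR
    rw [abs_le]
    constructor
    · linarith [h3.1, h4, h0, hB0, sq_nonneg x]
    · linarith [h3.2, h4, h0, hB0, sq_nonneg x]
  calc struveP q x * (|(-x ^ 2 + 12 * a * (a - 1) + R)| / x ^ 4)
      ≤ struveP q x * (((1 + 184 * q ^ 2) * x ^ 2) / x ^ 4) := by gcongr
    _ = (1 + 184 * q ^ 2) * struveP q x / x ^ 2 := by
        field_simp
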